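/- arXiv:2403.17463 — 2 statements merged into one kernel-verified Lean document; each statement's English description precedes it below -/
import Mathlib

section
/- (Theorem 1, integral characterization, Hopf–Lax form.) Let J be a nonempty compact interval of ℝ, and suppose u_T is left continuous, takes values in J, and satisfies the Oleinik condition (O) at T. Set y̌ := x̌ − T·f'(u_T(x̌)) and U_o^♯(x) := sup { U(x) : U ∈ II_T(U_T; J) }. For a bounded measurable function u_o : ℝ → ℝ with values in J, define U_o(x) := U_o^♭(y̌) + ∫_{y̌}^{x} u_o(ξ) dξ. Then S_T U_o = U_T if and only if for every y ∈ ℝ one has U_o^♭(y) − U_o^♭(y̌) ≤ ∫_{y̌}^{y} u_o(ξ) dξ ≤ U_o^♯(y) − U_o^♯(y̌). -/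
open Filter MeasureTheory

/-- Condition (f): `f` is `C²`, strongly convex (`f'' > 0` everywhere), and
`f' → ∓∞` at `∓∞`. -/
def CondF (f : ℝ → ℝ) : Prop :=
  ContDiff ℝ 2 f ∧ (∀ x, 0 < deriv (deriv f) x) ∧
    Tendsto (deriv f) atBot atBot ∧ Tendsto (deriv f) atTop atTop

/-- The Legendre transform `f*(y) = sup_x (y·x − f(x))`. -/
noncomputable def legendre (f : ℝ → ℝ) (y : ℝ) : ℝ :=
  sSup (Set.range fun x => y * x - f x)

/-- `U_T(x) = ∫_{x̌}^x u_T`. -/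
noncomputable def UT (uT : ℝ → ℝ) (xc x : ℝ) : ℝ := ∫ ξ in xc..x, uT ξ

/-- `U_o^♭(x) = sup_ξ [U_T(ξ) − T f*((ξ−x)/T)]`. -/
noncomputable def Uflat (f : ℝ → ℝ) (T : ℝ) (uT : ℝ → ℝ) (xc x : ℝ) : ℝ :=
  sSup (Set.range fun ξ => UT uT xc ξ - T * legendre f ((ξ - x) / T))

/-- `M(x)`: the set of maximizers in the definition of `U_o^♭(x)`. -/
def MSet (f : ℝ → ℝ) (T : ℝ) (uT : ℝ → ℝ) (xc x : ℝ) : Set ℝ :=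
  {ξ | UT uT xc ξ = Uflat f T uT xc x + T * legendre f ((ξ - x) / T)}

/-- Oleinik condition (O) at `T`. -/
def Oleinik (f : ℝ → ℝ) (T : ℝ) (uT : ℝ → ℝ) : Prop :=
  ∀ x Δ : ℝ, 0 < Δ → deriv f (uT (x + Δ)) - deriv f (uT x) ≤ Δ / T

/-- The Hopf–Lax operator at time `T`: `(S_T U)(x) = inf_ξ [U(ξ) + T f*((x−ξ)/T)]`. -/
noncomputable def HopfLax (f : ℝ → ℝ) (T : ℝ) (U : ℝ → ℝ) (x : ℝ) : ℝ :=
  sInf (Set.range fun ξ => U ξ + T * legendre f ((x - ξ) / T))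

/-- Left continuity of a real function. -/
def LeftCts (u : ℝ → ℝ) : Prop :=
  ∀ x, Tendsto u (nhdsWithin x (Set.Iio x)) (nhds (u x))

/-- `II_T(U_T; J)`: Lipschitz functions with a.e. derivative in `J` evolving into `U_T`
under the Hopf–Lax semigroup. -/
def IIT (f : ℝ → ℝ) (T : ℝ) (uT : ℝ → ℝ) (xc : ℝ) (J : Set ℝ) : Set (ℝ → ℝ) :=
  {U | (∃ K, LipschitzWith K U) ∧ (∀ᵐ x ∂volume, deriv U x ∈ J) ∧
    ∀ x, HopfLax f T U x = UT uT xc x}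

/-- `U_o^♯(x) = sup { U(x) : U ∈ II_T(U_T; J) }`. -/
noncomputable def Usharp (f : ℝ → ℝ) (T : ℝ) (uT : ℝ → ℝ) (xc : ℝ) (J : Set ℝ) (x : ℝ) : ℝ :=
  sSup ((fun U : ℝ → ℝ => U x) '' IIT f T uT xc J)

/-!
Write `foot x = x - T f'(u_T x)` for the foot of the backward characteristic through `(x, T)`.
The Oleinik condition says that `u_T` lies below the characteristic speed `(f')⁻¹((s - foot x)/T)`
to the right of `x` and above it to the left, so `x` is a maximizer in the definition of
`U_o^♭(foot x)`. Every Lipschitz `U` with `S_T U = U_T` takes this same value at `foot x`: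
the minimizers of the Hopf–Lax formula at `z < x` lie in `[foot z, foot x]`, and left continuity
of `u_T` squeezes them to `foot x`. Since `U_o^♭ ≤ U` is equivalent to `S_T U ≥ U_T`, and
`U(foot x) ≤ U_o^♯(foot x)` gives `S_T U ≤ U_T`, a function `U` with slopes in `J` satisfies
`S_T U = U_T` iff `U_o^♭ ≤ U ≤ U_o^♯`. The integral form follows because `U_o^♭` and `U_o^♯`
agree at `y̌ = foot x̌`.
-/

open Set Topology

namespace CondF

variable {f : ℝ → ℝ}

lemma differentiable (hf : CondF f) : Differentiable ℝ f := hf.1.differentiable (by norm_num)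

lemma strictMono_deriv (hf : CondF f) : StrictMono (deriv f) := strictMono_of_deriv_pos hf.2.1

lemma continuous_deriv (hf : CondF f) : Continuous (deriv f) :=
  hf.1.continuous_deriv (by norm_num)

lemma hasDerivAt_deriv (hf : CondF f) (x : ℝ) :
    HasDerivAt (deriv f) (deriv (deriv f) x) x :=
  ((hf.1.iterate_deriv' 1 1).differentiable (by norm_num) x).hasDerivAt

noncomputable def derivInv (hf : CondF f) : ℝ ≃o ℝ :=
  (hf.strictMono_deriv.orderIsoOfSurjective _
    (hf.continuous_deriv.surjective hf.2.2.2 hf.2.2.1)).symm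

@[simp]
lemma deriv_derivInv (hf : CondF f) (y : ℝ) : deriv f (hf.derivInv y) = y :=
  hf.derivInv.symm_apply_apply y

@[simp]
lemma derivInv_deriv (hf : CondF f) (x : ℝ) : hf.derivInv (deriv f x) = x :=
  hf.derivInv.apply_symm_apply x

lemma derivInv_le_iff (hf : CondF f) {y p : ℝ} : hf.derivInv y ≤ p ↔ y ≤ deriv f p :=
  hf.derivInv.symm.symm_apply_le

lemma le_derivInv_iff (hf : CondF f) {y p : ℝ} : p ≤ hf.derivInv y ↔ deriv f p ≤ y :=
  hf.derivInv.symm.le_symm_apply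

lemma add_deriv_mul_sub_le (hf : CondF f) (x z : ℝ) : f z + deriv f z * (x - z) ≤ f x := by
  have hconv := hf.strictMono_deriv.monotone.convexOn_univ_of_deriv hf.differentiable
  rcases lt_trichotomy z x with h | rfl | h
  · have := hconv.deriv_le_slope trivial trivial h (hf.differentiable z)
    rw [slope_def_field, le_div_iff₀ (sub_pos.2 h)] at this
    linarith
  · simp
  · have := hconv.slope_le_deriv trivial trivial h (hf.differentiable z)
    rw [slope_def_field, div_le_iff₀ (sub_pos.2 h)] at this
    linarith

lemma isGreatest_legendre (hf : CondF f) (y : ℝ) :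
    IsGreatest (range fun x => y * x - f x) (y * hf.derivInv y - f (hf.derivInv y)) := by
  refine ⟨⟨_, rfl⟩, ?_⟩
  rintro _ ⟨x, rfl⟩
  have := hf.add_deriv_mul_sub_le x (hf.derivInv y)
  rw [deriv_derivInv] at this
  dsimp only
  linarith

lemma legendre_eq (hf : CondF f) (y : ℝ) :
    legendre f y = y * hf.derivInv y - f (hf.derivInv y) :=
  (hf.isGreatest_legendre y).csSup_eq

lemma mul_sub_le_legendre (hf : CondF f) (x y : ℝ) : y * x - f x ≤ legendre f y := by
  rw [hf.legendre_eq]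
  exact (hf.isGreatest_legendre y).2 ⟨x, rfl⟩

lemma hasDerivAt_legendre (hf : CondF f) (y : ℝ) :
    HasDerivAt (legendre f) (hf.derivInv y) y := by
  have hinv : HasDerivAt hf.derivInv (deriv (deriv f) (hf.derivInv y))⁻¹ y :=
    .of_local_left_inverse hf.derivInv.continuous.continuousAt (hf.hasDerivAt_deriv _)
      (hf.2.1 _).ne' (.of_forall hf.deriv_derivInv)
  rw [show legendre f = fun y => y * hf.derivInv y - f (hf.derivInv y) from funext hf.legendre_eq]
  refine (((hasDerivAt_id' y).mul hinv).sub
    ((hf.differentiable _).hasDerivAt.comp y hinv)).congr_deriv ?_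
  rw [deriv_derivInv]
  ring

lemma continuous_legendre (hf : CondF f) : Continuous (legendre f) :=
  continuous_iff_continuousAt.2 fun y => (hf.hasDerivAt_legendre y).continuousAt

lemma mul_abs_sub_le_mul_legendre (hf : CondF f) {T : ℝ} (hT : 0 < T) (N v : ℝ) :
    N * |v| - T * max (f N) (f (-N)) ≤ T * legendre f (v / T) := by
  have key : ∀ x, v * x - T * f x ≤ T * legendre f (v / T) := fun x => by
    have := mul_le_mul_of_nonneg_left (hf.mul_sub_le_legendre x (v / T)) hT.le
    rwa [show T * (v / T * x - f x) = v * x - T * f x by field_simp] at this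
  have hmax := mul_le_mul_of_nonneg_left (le_max_left (f N) (f (-N))) hT.le
  have hmax' := mul_le_mul_of_nonneg_left (le_max_right (f N) (f (-N))) hT.le
  rcases le_total 0 v with hv | hv
  · rw [abs_of_nonneg hv]; linarith [key N]
  · rw [abs_of_nonpos hv]; linarith [key (-N)]

lemma integral_derivInv (hf : CondF f) {T : ℝ} (hT : 0 < T) (ξ x η : ℝ) :
    ∫ s in x..η, hf.derivInv ((s - ξ) / T)
      = T * legendre f ((η - ξ) / T) - T * legendre f ((x - ξ) / T) := by
  have hcont : Continuous fun s => hf.derivInv ((s - ξ) / T) :=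
    hf.derivInv.continuous.comp ((continuous_sub_right ξ).div_const T)
  refine intervalIntegral.integral_eq_sub_of_hasDerivAt
    (f := fun s => T * legendre f ((s - ξ) / T)) (fun s _ => ?_) (hcont.intervalIntegrable _ _)
  refine (((hf.hasDerivAt_legendre _).comp s
    (((hasDerivAt_id s).sub_const ξ).div_const T)).const_mul T).congr_deriv ?_
  simp only [id]
  field_simp

end CondF

def HasSlopesIn (U : ℝ → ℝ) (a b : ℝ) : Prop :=
  ∀ ⦃y y' : ℝ⦄, y ≤ y' → a * (y' - y) ≤ U y' - U y ∧ U y' - U y ≤ b * (y' - y)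

namespace HasSlopesIn

variable {U : ℝ → ℝ} {a b : ℝ}

lemma abs_sub_le (hU : HasSlopesIn U a b) (p q : ℝ) :
    |U p - U q| ≤ max |a| |b| * |p - q| := by
  have ha := abs_le.1 (le_max_left |a| |b|)
  have hb := abs_le.1 (le_max_right |a| |b|)
  rcases le_total q p with h | h
  · obtain ⟨h₁, h₂⟩ := hU h
    rw [abs_of_nonneg (sub_nonneg.2 h), abs_le]
    constructor <;> nlinarith
  · obtain ⟨h₁, h₂⟩ := hU h
    rw [abs_sub_comm, abs_sub_comm p, abs_of_nonneg (sub_nonneg.2 h), abs_le]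
    constructor <;> nlinarith

lemma lipschitzWith (hU : HasSlopesIn U a b) :
    LipschitzWith (max |a| |b|).toNNReal U := by
  refine .of_dist_le_mul fun p q => ?_
  rw [Real.dist_eq, Real.dist_eq, Real.coe_toNNReal _ ((abs_nonneg a).trans (le_max_left _ _))]
  exact hU.abs_sub_le p q

lemma const_add (hU : HasSlopesIn U a b) (c : ℝ) : HasSlopesIn (fun y => c + U y) a b := by
  intro y y' h
  simpa only [add_sub_add_left_eq_sub] using hU h

lemma ciSup {ι : Type*} [Nonempty ι] {F : ι → ℝ → ℝ} (hF : ∀ i, HasSlopesIn (F i) a b)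
    (hbdd : ∀ y, BddAbove (range fun i => F i y)) :
    HasSlopesIn (fun y => ⨆ i, F i y) a b := by
  intro y y' h
  constructor
  · suffices ∀ i, F i y ≤ (⨆ i, F i y') - a * (y' - y) by
      linarith [ciSup_le this]
    intro i
    linarith [(hF i h).1, le_ciSup (hbdd y') i]
  · suffices ∀ i, F i y' ≤ (⨆ i, F i y) + b * (y' - y) by
      linarith [ciSup_le this]
    intro i
    linarith [(hF i h).2, le_ciSup (hbdd y) i]

lemma ae_deriv_mem (hU : HasSlopesIn U a b) : ∀ᵐ x, deriv U x ∈ Icc a b := by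
  filter_upwards [hU.lipschitzWith.ae_differentiableAt] with x hx
  refine isClosed_Icc.mem_of_tendsto ((hasDerivWithinAt_iff_tendsto_slope' self_notMem_Ioi).1
    hx.hasDerivAt.hasDerivWithinAt) ?_
  filter_upwards [self_mem_nhdsWithin] with y (hy : x < y)
  have hpos := sub_pos.2 hy
  obtain ⟨h₁, h₂⟩ := hU hy.le
  rw [slope_def_field]
  exact ⟨(le_div_iff₀ hpos).2 h₁, (div_le_iff₀ hpos).2 h₂⟩

end HasSlopesIn

lemma intervalIntegrable_of_mem_Icc {u : ℝ → ℝ} {a b : ℝ} (hu : Measurable u)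
    (hbd : ∀ x, u x ∈ Icc a b) (p q : ℝ) : IntervalIntegrable u volume p q := by
  refine (intervalIntegrable_const (c := max |a| |b|)).mono_fun' hu.aestronglyMeasurable
    (.of_forall fun x => ?_)
  exact abs_le.2 ⟨by linarith [neg_abs_le a, le_max_left |a| |b|, (hbd x).1],
    by linarith [le_abs_self b, le_max_right |a| |b|, (hbd x).2]⟩

lemma hasSlopesIn_integral {u : ℝ → ℝ} {a b : ℝ} (hu : Measurable u)
    (hbd : ∀ x, u x ∈ Icc a b) (x₀ : ℝ) :
    HasSlopesIn (fun x => ∫ s in x₀..x, u s) a b := by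
  intro y y' h
  rw [intervalIntegral.integral_interval_sub_left (intervalIntegrable_of_mem_Icc hu hbd _ _)
    (intervalIntegrable_of_mem_Icc hu hbd _ _)]
  constructor
  · simpa [mul_comm] using intervalIntegral.integral_mono_on h intervalIntegrable_const
      (intervalIntegrable_of_mem_Icc hu hbd _ _) fun s _ => (hbd s).1
  · simpa [mul_comm] using intervalIntegral.integral_mono_on h
      (intervalIntegrable_of_mem_Icc hu hbd _ _) intervalIntegrable_const fun s _ => (hbd s).2

lemma hasSlopesIn_of_ae_deriv_mem {U : ℝ → ℝ} {a b : ℝ} {K : NNReal} (hU : LipschitzWith K U)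
    (hd : ∀ᵐ x, deriv U x ∈ Icc a b) : HasSlopesIn U a b := by
  intro y y' h
  have hac := (hU.lipschitzOnWith (s := uIcc y y')).absolutelyContinuousOnInterval
  rw [← hac.integral_deriv_eq_sub]
  constructor
  · simpa [mul_comm] using intervalIntegral.integral_mono_ae_restrict h intervalIntegrable_const
      hac.intervalIntegrable_deriv (ae_restrict_of_ae (hd.mono fun x hx => hx.1))
  · simpa [mul_comm] using intervalIntegral.integral_mono_ae_restrict h
      hac.intervalIntegrable_deriv intervalIntegrable_const
      (ae_restrict_of_ae (hd.mono fun x hx => hx.2))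

lemma integral_le_integral_of_le_right_of_ge_left {φ ψ : ℝ → ℝ} {x η : ℝ}
    (hφ : ∀ p q, IntervalIntegrable φ volume p q) (hψ : ∀ p q, IntervalIntegrable ψ volume p q)
    (hright : ∀ s, x ≤ s → φ s ≤ ψ s) (hleft : ∀ s, s ≤ x → ψ s ≤ φ s) :
    ∫ s in x..η, φ s ≤ ∫ s in x..η, ψ s := by
  rcases le_total x η with h | h
  · exact intervalIntegral.integral_mono_on h (hφ _ _) (hψ _ _) fun s hs => hright s hs.1
  · rw [intervalIntegral.integral_symm, intervalIntegral.integral_symm η, neg_le_neg_iff]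
    exact intervalIntegral.integral_mono_on h (hψ _ _) (hφ _ _) fun s hs => hleft s hs.2

open intervalIntegral in
lemma le_of_eventually_integral_le_left {φ ψ : ℝ → ℝ} {z : ℝ}
    (hφm : StronglyMeasurableAtFilter φ (𝓝[≤] z)) (hψm : StronglyMeasurableAtFilter ψ (𝓝[≤] z))
    (hφ : ContinuousWithinAt φ (Iic z) z) (hψ : ContinuousWithinAt ψ (Iic z) z)
    (h : ∀ᶠ η in 𝓝[<] z, ∫ s in η..z, φ s ≤ ∫ s in η..z, ψ s) : φ z ≤ ψ z := by
  have hd := ((integral_hasDerivWithinAt_right (a := z) (s := Iic z) .refl hψm hψ).sub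
    (integral_hasDerivWithinAt_right (a := z) (s := Iic z) .refl hφm hφ))
  rw [hasDerivWithinAt_iff_tendsto_slope, Iic_sdiff_right] at hd
  refine sub_nonneg.1 (ge_of_tendsto hd ?_)
  filter_upwards [h, self_mem_nhdsWithin] with η hη (hηz : η < z)
  simp only [slope_def_field, Pi.sub_apply, integral_same, sub_zero]
  rw [integral_symm η, integral_symm η]
  exact div_nonneg_of_nonpos (by linarith) (by linarith)

open intervalIntegral in
lemma le_of_eventually_integral_le_right {φ ψ : ℝ → ℝ} {z : ℝ}
    (hφm : StronglyMeasurableAtFilter φ (𝓝[>] z)) (hψm : StronglyMeasurableAtFilter ψ (𝓝[>] z))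
    (hφ : ContinuousWithinAt φ (Ioi z) z) (hψ : ContinuousWithinAt ψ (Ioi z) z)
    (h : ∀ᶠ η in 𝓝[>] z, ∫ s in z..η, φ s ≤ ∫ s in z..η, ψ s) : φ z ≤ ψ z := by
  have hd := ((integral_hasDerivWithinAt_right (a := z) (s := Ici z) .refl hψm hψ).sub
    (integral_hasDerivWithinAt_right (a := z) (s := Ici z) .refl hφm hφ))
  rw [hasDerivWithinAt_iff_tendsto_slope, Ici_sdiff_left] at hd
  refine sub_nonneg.1 (ge_of_tendsto hd ?_)
  filter_upwards [h, self_mem_nhdsWithin] with η hη (hηz : z < η)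
  simp only [slope_def_field, Pi.sub_apply, integral_same, sub_zero]
  exact div_nonneg (by linarith) (by linarith)

section HopfLax

variable {f : ℝ → ℝ} {T : ℝ} {V : ℝ → ℝ} {K : NNReal}

lemma exists_isLeast_hopfLax (hf : CondF f) (hT : 0 < T) (hV : LipschitzWith K V) (x : ℝ) :
    ∃ ξ, IsLeast (range fun ξ => V ξ + T * legendre f ((x - ξ) / T))
      (V ξ + T * legendre f ((x - ξ) / T)) := by
  have hcoercive : ∀ ξ, ‖ξ‖ + (V x - |x| - T * max (f (K + 1)) (f (-(K + 1))))
      ≤ V ξ + T * legendre f ((x - ξ) / T) := fun ξ => by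
    have h₁ := hf.mul_abs_sub_le_mul_legendre hT (K + 1) (x - ξ)
    have h₂ : |V x - V ξ| ≤ K * |x - ξ| := by simpa [Real.dist_eq] using hV.dist_le_mul x ξ
    have h₃ : |ξ| - |x| ≤ |x - ξ| := by
      rw [abs_sub_comm]
      exact abs_sub_abs_le_abs_sub ξ x
    rw [Real.norm_eq_abs]
    linarith [le_abs_self (V x - V ξ)]
  have hcont : Continuous fun ξ => V ξ + T * legendre f ((x - ξ) / T) :=
    hV.continuous.add (continuous_const.mul
      (hf.continuous_legendre.comp ((continuous_sub_left x).div_const T)))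
  obtain ⟨ξ, hξ⟩ := hcont.exists_forall_le <| tendsto_atTop_mono hcoercive <|
    tendsto_atTop_add_const_right _ _ tendsto_norm_cocompact_atTop
  exact ⟨ξ, ⟨ξ, rfl⟩, by rintro _ ⟨ζ, rfl⟩; exact hξ ζ⟩

lemma hopfLax_le (hf : CondF f) (hT : 0 < T) (hV : LipschitzWith K V) (x ξ : ℝ) :
    HopfLax f T V x ≤ V ξ + T * legendre f ((x - ξ) / T) :=
  have ⟨_, hmin⟩ := exists_isLeast_hopfLax hf hT hV x
  csInf_le ⟨_, hmin.2⟩ ⟨ξ, rfl⟩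

lemma sub_legendre_le (hf : CondF f) (hT : 0 < T) (hV : LipschitzWith K V) (y ξ : ℝ) :
    V ξ - T * legendre f ((ξ - y) / T) ≤ V y + T * max (f K) (f (-K)) := by
  have h₁ := hf.mul_abs_sub_le_mul_legendre hT K (ξ - y)
  have h₂ : |V ξ - V y| ≤ K * |ξ - y| := by simpa [Real.dist_eq] using hV.dist_le_mul ξ y
  linarith [le_abs_self (V ξ - V y)]

lemma bddAbove_range_sub_legendre (hf : CondF f) (hT : 0 < T) (hV : LipschitzWith K V) (y : ℝ) :
    BddAbove (range fun ξ => V ξ - T * legendre f ((ξ - y) / T)) :=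
  ⟨_, forall_mem_range.2 (sub_legendre_le hf hT hV y)⟩

end HopfLax

/-- Foot at time `0` of the backward characteristic through `(x, T)`. -/
noncomputable def foot (f : ℝ → ℝ) (T : ℝ) (uT : ℝ → ℝ) (x : ℝ) : ℝ :=
  x - T * deriv f (uT x)

section Characteristics

variable {f uT : ℝ → ℝ} {T xc a b : ℝ}

lemma sub_foot_div (hT : T ≠ 0) (x s : ℝ) :
    (s - foot f T uT x) / T = deriv f (uT x) + (s - x) / T := by
  unfold foot
  field_simp
  ring

lemma sub_foot_self_div (hT : T ≠ 0) (x : ℝ) : (x - foot f T uT x) / T = deriv f (uT x) := by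
  simpa using sub_foot_div (uT := uT) hT x x

lemma Oleinik.le_derivInv (hO : Oleinik f T uT) (hf : CondF f) (hT : 0 < T) {x s : ℝ}
    (h : x ≤ s) : uT s ≤ hf.derivInv ((s - foot f T uT x) / T) := by
  rw [sub_foot_div hT.ne', hf.le_derivInv_iff]
  rcases h.eq_or_lt with rfl | h
  · simp
  · have := hO x (s - x) (sub_pos.2 h)
    rw [add_sub_cancel] at this
    linarith

lemma Oleinik.derivInv_le (hO : Oleinik f T uT) (hf : CondF f) (hT : 0 < T) {x s : ℝ}
    (h : s ≤ x) : hf.derivInv ((s - foot f T uT x) / T) ≤ uT s := by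
  rw [sub_foot_div hT.ne', hf.derivInv_le_iff]
  rcases h.eq_or_lt with rfl | h
  · simp
  · have := hO s (x - s) (sub_pos.2 h)
    rw [add_sub_cancel] at this
    rw [← neg_sub x s, neg_div]
    linarith

lemma hasSlopesIn_UT (huT : Measurable uT) (hbd : ∀ x, uT x ∈ Icc a b) :
    HasSlopesIn (UT uT xc) a b :=
  hasSlopesIn_integral huT hbd xc

lemma UT_sub_UT (huT : Measurable uT) (hbd : ∀ x, uT x ∈ Icc a b) (x η : ℝ) :
    UT uT xc η - UT uT xc x = ∫ s in x..η, uT s :=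
  intervalIntegral.integral_interval_sub_left (intervalIntegrable_of_mem_Icc huT hbd _ _)
    (intervalIntegrable_of_mem_Icc huT hbd _ _)

lemma le_Uflat (hf : CondF f) (hT : 0 < T) (huT : Measurable uT)
    (hbd : ∀ x, uT x ∈ Icc a b) (y ξ : ℝ) :
    UT uT xc ξ - T * legendre f ((ξ - y) / T) ≤ Uflat f T uT xc y :=
  le_csSup (bddAbove_range_sub_legendre hf hT (hasSlopesIn_UT huT hbd).lipschitzWith y)
    ⟨ξ, rfl⟩

lemma hasSlopesIn_Uflat (hf : CondF f) (hT : 0 < T) (huT : Measurable uT)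
    (hbd : ∀ x, uT x ∈ Icc a b) : HasSlopesIn (Uflat f T uT xc) a b := by
  have hUT := hasSlopesIn_UT (xc := xc) huT hbd
  have hshift : Uflat f T uT xc =
      fun y => ⨆ η, UT uT xc (y + η) - T * legendre f ((y + η - y) / T) :=
    funext fun y => ((Equiv.addLeft y).iSup_comp
      (g := fun ξ => UT uT xc ξ - T * legendre f ((ξ - y) / T))).symm
  rw [hshift]
  refine .ciSup (fun η y y' h => ?_) fun y =>
    (bddAbove_range_sub_legendre hf hT hUT.lipschitzWith y).mono ?_
  · have := hUT (show y + η ≤ y' + η by linarith)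
    simp only [add_sub_cancel_left, add_sub_add_right_eq_sub] at this ⊢
    constructor <;> linarith [this.1, this.2]
  · rintro _ ⟨η, rfl⟩
    exact ⟨y + η, rfl⟩

/-- The Oleinik condition makes `x` a maximizer in the definition of `U_o^♭(foot x)`. -/
lemma Uflat_foot (hf : CondF f) (hT : 0 < T) (huT : Measurable uT)
    (hbd : ∀ x, uT x ∈ Icc a b) (hO : Oleinik f T uT) (x : ℝ) :
    Uflat f T uT xc (foot f T uT x) = UT uT xc x - T * legendre f (deriv f (uT x)) := by
  rw [← sub_foot_self_div hT.ne']
  refine IsGreatest.csSup_eq ⟨⟨x, rfl⟩, ?_⟩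
  rintro _ ⟨η, rfl⟩
  have hchar : Continuous fun s => hf.derivInv ((s - foot f T uT x) / T) :=
    hf.derivInv.continuous.comp ((continuous_sub_right _).div_const T)
  have := integral_le_integral_of_le_right_of_ge_left (η := η)
    (intervalIntegrable_of_mem_Icc huT hbd) (hchar.intervalIntegrable)
    (fun s => hO.le_derivInv hf hT) (fun s => hO.derivInv_le hf hT)
  rw [← UT_sub_UT (xc := xc) huT hbd, hf.integral_derivInv hT] at this
  dsimp only
  linarith

lemma Uflat_le_iff_le_hopfLax (hf : CondF f) (hT : 0 < T) (huT : Measurable uT)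
    (hbd : ∀ x, uT x ∈ Icc a b) {V : ℝ → ℝ} {K : NNReal} (hV : LipschitzWith K V) :
    (∀ y, Uflat f T uT xc y ≤ V y) ↔ ∀ x, UT uT xc x ≤ HopfLax f T V x := by
  constructor
  · intro h x
    refine le_csInf (range_nonempty _) ?_
    rintro _ ⟨ξ, rfl⟩
    linarith [le_Uflat (xc := xc) hf hT huT hbd ξ x, h ξ]
  · intro h y
    refine csSup_le (range_nonempty _) ?_
    rintro _ ⟨η, rfl⟩
    linarith [h η, hopfLax_le hf hT hV η y]

lemma hopfLax_le_of_apply_foot_le (hf : CondF f) (hT : 0 < T) {V : ℝ → ℝ} {K : NNReal}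
    (hV : LipschitzWith K V) {x : ℝ}
    (h : V (foot f T uT x) ≤ UT uT xc x - T * legendre f (deriv f (uT x))) :
    HopfLax f T V x ≤ UT uT xc x := by
  have := hopfLax_le hf hT hV x (foot f T uT x)
  rw [sub_foot_self_div hT.ne'] at this
  linarith

lemma Uflat_mem_IIT (hf : CondF f) (hT : 0 < T) (huT : Measurable uT)
    (hbd : ∀ x, uT x ∈ Icc a b) (hO : Oleinik f T uT) :
    Uflat f T uT xc ∈ IIT f T uT xc (Icc a b) := by
  have h := hasSlopesIn_Uflat (xc := xc) hf hT huT hbd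
  refine ⟨⟨_, h.lipschitzWith⟩, h.ae_deriv_mem, fun x => le_antisymm ?_ ?_⟩
  · exact hopfLax_le_of_apply_foot_le hf hT h.lipschitzWith (Uflat_foot hf hT huT hbd hO x).le
  · exact (Uflat_le_iff_le_hopfLax hf hT huT hbd h.lipschitzWith).1 (fun _ => le_rfl) x

end Characteristics

section Pinning

variable {f uT U : ℝ → ℝ} {T xc a b : ℝ} {K : NNReal}

lemma integral_le_integral_derivInv_of_hopfLax_eq (hf : CondF f) (hT : 0 < T)
    (huT : Measurable uT) (hbd : ∀ x, uT x ∈ Icc a b) (hU : LipschitzWith K U)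
    (hHL : ∀ x, HopfLax f T U x = UT uT xc x) {z ξ : ℝ}
    (hξ : U ξ + T * legendre f ((z - ξ) / T) = UT uT xc z) (η : ℝ) :
    ∫ s in z..η, uT s ≤ ∫ s in z..η, hf.derivInv ((s - ξ) / T) := by
  rw [← UT_sub_UT (xc := xc) huT hbd, hf.integral_derivInv hT]
  linarith [hHL η ▸ hopfLax_le hf hT hU η ξ]

lemma foot_le_of_integral_le (hf : CondF f) (hT : 0 < T) (huT : Measurable uT)
    (hlc : LeftCts uT) {z ξ : ℝ}
    (h : ∀ η, ∫ s in z..η, uT s ≤ ∫ s in z..η, hf.derivInv ((s - ξ) / T)) :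
    foot f T uT z ≤ ξ := by
  have hchar : Continuous fun s => hf.derivInv ((s - ξ) / T) :=
    hf.derivInv.continuous.comp ((continuous_sub_right _).div_const T)
  have key : hf.derivInv ((z - ξ) / T) ≤ uT z := by
    refine le_of_eventually_integral_le_left (hchar.stronglyMeasurableAtFilter _ _)
      huT.stronglyMeasurable.stronglyMeasurableAtFilter hchar.continuousWithinAt
      (continuousWithinAt_Iio_iff_Iic.1 (hlc z)) (.of_forall fun η => ?_)
    rw [intervalIntegral.integral_symm z, intervalIntegral.integral_symm z, neg_le_neg_iff]
    exact h η
  rw [hf.derivInv_le_iff, div_le_iff₀ hT] at key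
  unfold foot
  linarith

lemma le_foot_of_integral_le (hf : CondF f) (hT : 0 < T) (huT : Measurable uT)
    (hbd : ∀ x, uT x ∈ Icc a b) (hO : Oleinik f T uT) {x z ξ : ℝ} (hzx : z < x)
    (h : ∀ η, ∫ s in z..η, uT s ≤ ∫ s in z..η, hf.derivInv ((s - ξ) / T)) :
    ξ ≤ foot f T uT x := by
  have hchar : ∀ c, Continuous fun s => hf.derivInv ((s - c) / T) := fun c =>
    hf.derivInv.continuous.comp ((continuous_sub_right _).div_const T)
  have key : hf.derivInv ((z - foot f T uT x) / T) ≤ hf.derivInv ((z - ξ) / T) := by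
    refine le_of_eventually_integral_le_right ((hchar _).stronglyMeasurableAtFilter _ _)
      ((hchar _).stronglyMeasurableAtFilter _ _) (hchar _).continuousWithinAt
      (hchar _).continuousWithinAt ?_
    filter_upwards [Ioo_mem_nhdsGT hzx] with η hη
    refine le_trans ?_ (h η)
    exact intervalIntegral.integral_mono_on hη.1.le ((hchar _).intervalIntegrable _ _)
      (intervalIntegrable_of_mem_Icc huT hbd _ _)
      fun s hs => hO.derivInv_le hf hT (hs.2.trans hη.2.le)
  rw [hf.derivInv.le_iff_le, div_le_div_iff_of_pos_right hT] at key
  linarith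

/-- Minimizers `ξ z` of the Hopf–Lax formula at `z < x` are trapped between `foot z` and
`foot x`, and `foot z → foot x` as `z → x⁻` by left continuity. -/
lemma apply_foot_of_hopfLax_eq (hf : CondF f) (hT : 0 < T) (huT : Measurable uT)
    (hbd : ∀ x, uT x ∈ Icc a b) (hO : Oleinik f T uT) (hlc : LeftCts uT)
    (hU : LipschitzWith K U) (hHL : ∀ x, HopfLax f T U x = UT uT xc x) (x : ℝ) :
    U (foot f T uT x) = UT uT xc x - T * legendre f (deriv f (uT x)) := by
  choose ξ hξ using exists_isLeast_hopfLax hf hT hU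
  have hval : ∀ z, U (ξ z) + T * legendre f ((z - ξ z) / T) = UT uT xc z :=
    fun z => (hξ z).csInf_eq.symm.trans (hHL z)
  have hint := fun z => integral_le_integral_derivInv_of_hopfLax_eq hf hT huT hbd hU hHL (hval z)
  have hleft : Tendsto id (𝓝[<] x) (𝓝 x) := tendsto_nhdsWithin_of_tendsto_nhds tendsto_id
  have hfoot : Tendsto (foot f T uT) (𝓝[<] x) (𝓝 (foot f T uT x)) :=
    hleft.sub (tendsto_const_nhds.mul ((hf.continuous_deriv.tendsto _).comp (hlc x)))
  have hξlim : Tendsto ξ (𝓝[<] x) (𝓝 (foot f T uT x)) :=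
    tendsto_of_tendsto_of_tendsto_of_le_of_le' hfoot tendsto_const_nhds
      (.of_forall fun z => foot_le_of_integral_le hf hT huT hlc (hint z))
      (eventually_nhdsWithin_of_forall fun z hz =>
        le_foot_of_integral_le hf hT huT hbd hO hz (hint z))
  have hlim : Tendsto (fun z => UT uT xc z - T * legendre f ((z - ξ z) / T)) (𝓝[<] x)
      (𝓝 (UT uT xc x - T * legendre f ((x - foot f T uT x) / T))) :=
    (((hasSlopesIn_UT huT hbd).lipschitzWith.continuous.tendsto x).comp hleft).sub
      (tendsto_const_nhds.mul ((hf.continuous_legendre.tendsto _).comp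
        ((hleft.sub hξlim).div_const T)))
  rw [sub_foot_self_div hT.ne'] at hlim
  refine tendsto_nhds_unique ((hU.continuous.tendsto _).comp hξlim) (hlim.congr fun z => ?_)
  simp only [Function.comp]
  linarith [hval z]

end Pinning

section Usharp

variable {f uT U : ℝ → ℝ} {T xc a b : ℝ}

lemma hasSlopesIn_of_mem_IIT (hU : U ∈ IIT f T uT xc (Icc a b)) : HasSlopesIn U a b :=
  let ⟨⟨_, hK⟩, hd, _⟩ := hU
  hasSlopesIn_of_ae_deriv_mem hK hd

lemma Usharp_foot (hf : CondF f) (hT : 0 < T) (huT : Measurable uT)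
    (hbd : ∀ x, uT x ∈ Icc a b) (hO : Oleinik f T uT) (hlc : LeftCts uT) (x : ℝ) :
    Usharp f T uT xc (Icc a b) (foot f T uT x)
      = UT uT xc x - T * legendre f (deriv f (uT x)) := by
  refine IsGreatest.csSup_eq
    ⟨⟨_, Uflat_mem_IIT hf hT huT hbd hO, Uflat_foot hf hT huT hbd hO x⟩, ?_⟩
  rintro _ ⟨U, ⟨⟨_, hK⟩, -, hHL⟩, rfl⟩
  exact (apply_foot_of_hopfLax_eq hf hT huT hbd hO hlc hK hHL x).le

lemma le_Usharp (hf : CondF f) (hT : 0 < T) (huT : Measurable uT)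
    (hbd : ∀ x, uT x ∈ Icc a b) (hO : Oleinik f T uT) (hlc : LeftCts uT)
    (hU : U ∈ IIT f T uT xc (Icc a b)) (y : ℝ) : U y ≤ Usharp f T uT xc (Icc a b) y := by
  refine le_csSup ⟨UT uT xc xc - T * legendre f (deriv f (uT xc))
    + max |a| |b| * |y - foot f T uT xc|, ?_⟩ ⟨U, hU, rfl⟩
  rintro _ ⟨W, hW, rfl⟩
  have := (hasSlopesIn_of_mem_IIT hW).abs_sub_le y (foot f T uT xc)
  obtain ⟨⟨_, hK⟩, -, hHL⟩ := hW
  rw [apply_foot_of_hopfLax_eq hf hT huT hbd hO hlc hK hHL] at this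
  linarith [le_abs_self (W y - (UT uT xc xc - T * legendre f (deriv f (uT xc))))]

theorem hopfLax_eq_UT_iff (hf : CondF f) (hT : 0 < T) (huT : Measurable uT)
    (hbd : ∀ x, uT x ∈ Icc a b) (hO : Oleinik f T uT) (hlc : LeftCts uT) {V : ℝ → ℝ}
    (hV : HasSlopesIn V a b) :
    (∀ x, HopfLax f T V x = UT uT xc x) ↔
      ∀ y, Uflat f T uT xc y ≤ V y ∧ V y ≤ Usharp f T uT xc (Icc a b) y := by
  have hflat := Uflat_le_iff_le_hopfLax (xc := xc) hf hT huT hbd hV.lipschitzWith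
  constructor
  · intro hHL y
    exact ⟨hflat.2 (fun x => (hHL x).ge) y,
      le_Usharp hf hT huT hbd hO hlc ⟨⟨_, hV.lipschitzWith⟩, hV.ae_deriv_mem, hHL⟩ y⟩
  · intro h x
    refine le_antisymm (hopfLax_le_of_apply_foot_le hf hT hV.lipschitzWith ?_)
      (hflat.1 (fun y => (h y).1) x)
    exact (h _).2.trans (Usharp_foot hf hT huT hbd hO hlc x).le

end Usharp

lemma IsCompact.exists_eq_Icc {J : Set ℝ} (hJcp : IsCompact J) (hJoc : J.OrdConnected)
    (hJne : J.Nonempty) : ∃ a b, J = Icc a b :=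
  ⟨sInf J, sSup J, (subset_Icc_csInf_csSup hJcp.bddBelow hJcp.bddAbove).antisymm
    (hJoc.out (hJcp.sInf_mem hJne) (hJcp.sSup_mem hJne))⟩

theorem stmt_18_general (f : ℝ → ℝ) (hf : CondF f) (T : ℝ) (hT : 0 < T)
    (J : Set ℝ) (hJcp : IsCompact J) (hJoc : J.OrdConnected)
    (uT : ℝ → ℝ) (huT : Measurable uT)
    (hlc : LeftCts uT) (huTJ : ∀ x, uT x ∈ J) (hO : Oleinik f T uT) (xc : ℝ)
    (yc : ℝ) (hyc : yc = xc - T * deriv f (uT xc))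
    (uo : ℝ → ℝ) (huo : Measurable uo) (huoJ : ∀ x, uo x ∈ J) :
    (∀ x : ℝ,
        HopfLax f T (fun z => Uflat f T uT xc yc + ∫ ξ in yc..z, uo ξ) x = UT uT xc x) ↔
      ∀ y : ℝ,
        Uflat f T uT xc y - Uflat f T uT xc yc ≤ (∫ ξ in yc..y, uo ξ) ∧
        (∫ ξ in yc..y, uo ξ) ≤ Usharp f T uT xc J y - Usharp f T uT xc J yc := by
  obtain ⟨a, b, rfl⟩ := hJcp.exists_eq_Icc hJoc ⟨_, huTJ 0⟩
  have hfoot : yc = foot f T uT xc := hyc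
  have hsharp : Usharp f T uT xc (Icc a b) yc = Uflat f T uT xc yc := by
    rw [hfoot, Usharp_foot hf hT huT huTJ hO hlc, Uflat_foot hf hT huT huTJ hO]
  rw [hopfLax_eq_UT_iff hf hT huT huTJ hO hlc ((hasSlopesIn_integral huo huoJ yc).const_add _)]
  refine forall_congr' fun y => and_congr ?_ ?_ <;> constructor <;> intro <;> linarith

theorem stmt_18 (f : ℝ → ℝ) (hf : CondF f) (T : ℝ) (hT : 0 < T)
    (J : Set ℝ) (hJne : J.Nonempty) (hJcp : IsCompact J) (hJoc : J.OrdConnected)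
    (uT : ℝ → ℝ) (huT : Measurable uT)
    (hlc : LeftCts uT) (huTJ : ∀ x, uT x ∈ J) (hO : Oleinik f T uT) (xc : ℝ)
    (yc : ℝ) (hyc : yc = xc - T * deriv f (uT xc))
    (uo : ℝ → ℝ) (huo : Measurable uo) (huoJ : ∀ x, uo x ∈ J) :
    (∀ x : ℝ,
        HopfLax f T (fun z => Uflat f T uT xc yc + ∫ ξ in yc..z, uo ξ) x = UT uT xc x) ↔
      ∀ y : ℝ,
        Uflat f T uT xc y - Uflat f T uT xc yc ≤ (∫ ξ in yc..y, uo ξ) ∧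
        (∫ ξ in yc..y, uo ξ) ≤ Usharp f T uT xc J y - Usharp f T uT xc J yc :=
  stmt_18_general f hf T hT J hJcp hJoc uT huT hlc huTJ hO xc yc hyc uo huo huoJ
end

section
/- (Proposition reverse, total variation bound.) There exists a function g : ℝ → ℝ with g(x) = (U_o^♭)'(x) for a.e. x ∈ ℝ whose total variation over ℝ is at most the total variation of u_T over ℝ (as an equality or inequality of extended nonnegative reals): Var(g; ℝ) ≤ Var(u_T; ℝ). -/
open Filter MeasureTheory

/-!
Let `φ = (f')⁻¹`, which is the derivative of `f*`. The supremum defining `U_o^♭(x)` is attained,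
and its largest maximizer `Ξ(x)` is nondecreasing in `x`, because by convexity of `f*` the
objective has increasing differences. At every continuity point of `Ξ` an envelope argument
gives `(U_o^♭)'(x) = φ((Ξ(x) - x)/T) =: g(x)`. First-order optimality at `Ξ(x)` puts `g(x)`
between the right and left limits of `u_T` at `Ξ(x)`, and `g` decreases where `Ξ` is constant.
So along any increasing chain, the oscillation of `g` is bounded by the oscillation of `u_T`
sampled just left and just right of the successive values of `Ξ`. Hence `Var g ≤ Var u_T`.
-/

open Set Topology

lemma hasDerivAt_of_sub_mul_le_sub {L : ℝ → ℝ} {m : ℝ → ℝ → ℝ} {x l : ℝ}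
    (H : ∀ a b, (b - a) * m a b ≤ L b - L a)
    (hright : Tendsto (m x) (𝓝[≠] x) (𝓝 l)) (hleft : Tendsto (fun a => m a x) (𝓝[≠] x) (𝓝 l)) :
    HasDerivAt L l x := by
  rw [hasDerivAt_iff_tendsto_slope]
  have hbounds : ∀ b ≠ x,
      min (m x b) (m b x) ≤ slope L x b ∧ slope L x b ≤ max (m x b) (m b x) := by
    intro b hb
    have h₁ := H x b
    have h₂ := H b x
    rw [slope_def_field]
    rcases hb.lt_or_gt with h | h
    · have h' : b - x < 0 := sub_neg.2 h
      refine ⟨(min_le_right _ _).trans ?_, le_trans ?_ (le_max_left _ _)⟩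
      · rw [le_div_iff_of_neg h']; linarith
      · rw [div_le_iff_of_neg h']; linarith
    · have h' : 0 < b - x := sub_pos.2 h
      refine ⟨(min_le_left _ _).trans ?_, le_trans ?_ (le_max_right _ _)⟩
      · rw [le_div_iff₀ h']; linarith
      · rw [div_le_iff₀ h']; linarith
  exact tendsto_of_tendsto_of_tendsto_of_le_of_le' (by simpa using hright.min hleft)
    (by simpa using hright.max hleft)
    (eventually_nhdsWithin_of_forall fun b hb => (hbounds b hb).1)
    (eventually_nhdsWithin_of_forall fun b hb => (hbounds b hb).2)

section MonotoneDeriv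

variable {F F' : ℝ → ℝ}

lemma mul_sub_le_sub_of_hasDerivAt (hF : ∀ x, HasDerivAt F (F' x) x) (hF' : Monotone F')
    (x y : ℝ) : F' x * (y - x) ≤ F y - F x := by
  have hFc : Continuous F := continuous_iff_continuousAt.2 fun x => (hF x).continuousAt
  rcases lt_trichotomy x y with hxy | rfl | hyx
  · obtain ⟨c, hc, hslope⟩ := exists_hasDerivAt_eq_slope F F' hxy hFc.continuousOn
      fun c _ => hF c
    exact (le_div_iff₀ (sub_pos.2 hxy)).1 (hslope ▸ hF' hc.1.le)
  · simp
  · obtain ⟨c, hc, hslope⟩ := exists_hasDerivAt_eq_slope F F' hyx hFc.continuousOn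
      fun c _ => hF c
    have := (div_le_iff₀ (sub_pos.2 hyx)).1 (hslope ▸ hF' hc.2.le)
    linarith

lemma monotone_add_sub_of_hasDerivAt (hF : ∀ x, HasDerivAt F (F' x) x) (hF' : Monotone F')
    {t : ℝ} (ht : 0 ≤ t) :
    Monotone fun y => F (y + t) - F y :=
  monotone_of_hasDerivAt_nonneg
    (fun y => ((hF (y + t)).comp_add_const y t).sub (hF y))
    fun _ => sub_nonneg.2 (hF' (le_add_of_nonneg_right ht))

end MonotoneDeriv

lemma HasDerivWithinAt.nonpos_of_forall_le {h : ℝ → ℝ} {d ξ : ℝ}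
    (hd : HasDerivWithinAt h d (Ici ξ) ξ) (hmax : ∀ ζ, h ζ ≤ h ξ) : d ≤ 0 := by
  have hmax' : IsLocalMaxOn h (Ici ξ) ξ := IsMaxOn.localize fun ζ _ => hmax ζ
  simpa using hmax'.hasFDerivWithinAt_nonpos hd.hasFDerivWithinAt
    (mem_posTangentConeAt_of_segment_subset (by simp [segment_eq_Icc, Icc_subset_Ici_self]) :
      (1 : ℝ) ∈ _)

lemma HasDerivWithinAt.nonneg_of_forall_le {h : ℝ → ℝ} {d ξ : ℝ}
    (hd : HasDerivWithinAt h d (Iic ξ) ξ) (hmax : ∀ ζ, h ζ ≤ h ξ) : 0 ≤ d := by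
  have hmax' : IsLocalMaxOn h (Iic ξ) ξ := IsMaxOn.localize fun ζ _ => hmax ζ
  simpa using hmax'.hasFDerivWithinAt_nonpos hd.hasFDerivWithinAt
    (mem_posTangentConeAt_of_segment_subset (by simp [segment_eq_Icc', Icc_subset_Iic_self]) :
      (-1 : ℝ) ∈ _)

lemma abs_sub_add_abs_sub_le_of_mem_Icc {p q A B G : ℝ} (hB : B ≤ G) (hA : G ≤ A) :
    |p - G| + |G - q| ≤ |p - q| + 2 * |p - A| + 2 * |q - B| := by
  have h₁ : |p - G| ≤ |p - A| + (A - G) := by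
    simpa [abs_of_nonneg (sub_nonneg.2 hA)] using abs_sub_le p A G
  have h₂ : |G - q| ≤ (G - B) + |q - B| := by
    simpa [abs_of_nonneg (sub_nonneg.2 hB), abs_sub_comm q B] using abs_sub_le G B q
  have h₃ : A - B ≤ |p - q| + |p - A| + |q - B| := by
    linarith [le_abs_self (A - B), abs_sub_le A p B, abs_sub_le p q B, abs_sub_comm A p]
  linarith

lemma Continuous.isGreatest_sSup_argmax {G : ℝ → ℝ} (hG : Continuous G)
    (hlim : Tendsto G (cocompact ℝ) atBot) :
    IsGreatest {ξ | ∀ ζ, G ζ ≤ G ξ} (sSup {ξ | ∀ ζ, G ζ ≤ G ξ}) := by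
  obtain ⟨ξ₀, hξ₀⟩ := hG.exists_forall_ge hlim
  obtain ⟨K, hK, hKc⟩ := mem_cocompact.1 (hlim.eventually (eventually_lt_atBot (G ξ₀)))
  have hsub : {ξ | ∀ ζ, G ζ ≤ G ξ} ⊆ K := fun ξ hξ => by
    by_contra hξK
    exact (hKc hξK).not_ge (hξ ξ₀)
  have hclosed : IsClosed {ξ | ∀ ζ, G ζ ≤ G ξ} := by
    simpa only [ofPred_forall] using isClosed_iInter fun ζ => isClosed_le continuous_const hG
  have hcpt := hK.of_isClosed_subset hclosed hsub
  exact ⟨hcpt.sSup_mem ⟨ξ₀, hξ₀⟩, fun ξ hξ => le_csSup hcpt.bddAbove hξ⟩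

lemma monotone_of_isGreatest_argmax {F : ℝ → ℝ → ℝ} {Ξ : ℝ → ℝ}
    (hF : ∀ a b ξ η, a ≤ b → ξ ≤ η → F b ξ - F a ξ ≤ F b η - F a η)
    (hΞ : ∀ x, IsGreatest {ξ | ∀ ζ, F x ζ ≤ F x ξ} (Ξ x)) : Monotone Ξ := by
  intro a b hab
  by_contra! hlt
  have hdiff := hF a b (Ξ b) (Ξ a) hab hlt.le
  have hmem : Ξ a ∈ {ξ | ∀ ζ, F b ζ ≤ F b ξ} := fun ζ =>
    ((hΞ b).1 ζ).trans (by linarith [(hΞ a).1 (Ξ b)])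
  exact hlt.not_ge ((hΞ b).2 hmem)

section BoundedVariation

variable {u : ℝ → ℝ}

lemma BoundedVariationOn.toReal_eVariationOn_Iic_add_le (hu : BoundedVariationOn u univ)
    {t s t' : ℝ} (hts : t ≤ s) (hst' : s ≤ t') :
    (eVariationOn u (Iic t)).toReal + |u t - u s| + |u s - u t'| ≤
      (eVariationOn u (Iic t')).toReal := by
  have hIic : ∀ {a b : ℝ}, a ≤ b →
      eVariationOn u (Iic a) + eVariationOn u (Icc a b) = eVariationOn u (Iic b) :=
    fun hab => by rw [← eVariationOn.union u isGreatest_Iic (isLeast_Icc hab),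
      Iic_union_Icc_eq_Iic hab]
  have hE : eVariationOn u (Iic t) + edist (u t) (u s) + edist (u s) (u t') ≤
      eVariationOn u (Iic t') :=
    calc _ ≤ eVariationOn u (Iic t) + eVariationOn u (Icc t s) + eVariationOn u (Icc s t') := by
          gcongr <;> apply eVariationOn.edist_le <;> simp [hts, hst']
      _ = eVariationOn u (Iic t') := by rw [hIic hts, hIic hst']
  have hfin : ∀ a, eVariationOn u (Iic a) ≠ ⊤ := fun a =>
    ne_top_of_le_ne_top hu (eVariationOn.mono u (subset_univ _))
  simp only [edist_dist, Real.dist_eq] at hE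
  rwa [← ENNReal.ofReal_toReal (hfin t), ← ENNReal.ofReal_add (by positivity) (by positivity),
    ← ENNReal.ofReal_add (by positivity) (by positivity),
    ENNReal.ofReal_le_iff_le_toReal (hfin t')] at hE

variable {ξ G : ℕ → ℝ}

/-- Each new value of `ξ` is handled by sampling `u` just left of it (near `u.leftLim`) and just
right of it (near `u.rightLim`); on a block where `ξ` is constant, `G` only decreases. -/
lemma BoundedVariationOn.eventually_sum_abs_add_abs_le (hu : BoundedVariationOn u univ)
    (hξ : Monotone ξ) (hG : ∀ i, G i ∈ Icc (u.rightLim (ξ i)) (u.leftLim (ξ i)))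
    (hblock : ∀ i, ξ i = ξ (i + 1) → G (i + 1) ≤ G i) (n : ℕ) {ε : ℝ} (hε : 0 < ε) :
    ∀ᶠ t in 𝓝[>] ξ n, ∑ i ∈ Finset.range n, |G (i + 1) - G i| + |G n - u t| ≤
      (eVariationOn u (Iic t)).toReal + ε := by
  have hleft : ∀ x {η : ℝ}, 0 < η → ∀ᶠ s in 𝓝[<] x, |u s - u.leftLim x| < η :=
    fun x _ hη => (hu.tendsto_leftLim x).eventually (eventually_abs_sub_lt _ hη)
  have hright : ∀ x {η : ℝ}, 0 < η → ∀ᶠ t in 𝓝[>] x, |u t - u.rightLim x| < η :=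
    fun x _ hη => (hu.tendsto_rightLim x).eventually (eventually_abs_sub_lt _ hη)
  induction n generalizing ε with
  | zero =>
    obtain ⟨s, hsα, hs⟩ := ((hleft (ξ 0) (by positivity : 0 < ε / 4)).and
      self_mem_nhdsWithin).exists
    filter_upwards [hright (ξ 0) (by positivity : 0 < ε / 4), self_mem_nhdsWithin]
      with t htβ ht
    have hjump := abs_sub_add_abs_sub_le_of_mem_Icc (p := u s) (q := u t) (hG 0).1 (hG 0).2
    have hV := hu.toReal_eVariationOn_Iic_add_le le_rfl (le_of_lt (lt_trans hs ht))
    simp only [Finset.range_zero, Finset.sum_empty, sub_self, abs_zero] at hV ⊢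
    linarith [abs_nonneg (u s - G 0),
      (ENNReal.toReal_nonneg : 0 ≤ (eVariationOn u (Iic s)).toReal)]
  | succ n ih =>
    rw [Finset.sum_range_succ]
    rcases (hξ n.le_succ).eq_or_lt with heq | hlt
    · filter_upwards [heq ▸ ih (half_pos hε), hright (ξ (n + 1)) (by positivity : 0 < ε / 4)]
        with t hS htβ
      have hjump := abs_sub_add_abs_sub_le_of_mem_Icc (p := G n) (q := u t) (A := G n)
        (hG (n + 1)).1 (hblock n heq)
      rw [sub_self, abs_zero, abs_sub_comm (G n)] at hjump
      linarith
    · obtain ⟨t, hS, ht⟩ := ((ih (half_pos hε)).and (Ioo_mem_nhdsGT hlt)).exists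
      obtain ⟨s, hsα, hs⟩ := ((hleft (ξ (n + 1)) (by positivity : 0 < ε / 8)).and
        (Ioo_mem_nhdsLT ht.2)).exists
      filter_upwards [hright (ξ (n + 1)) (by positivity : 0 < ε / 8), self_mem_nhdsWithin]
        with t' ht'β ht'
      have htri : |G (n + 1) - G n| ≤ |G n - u t| + |u t - u s| + |u s - G (n + 1)| := by
        rw [abs_sub_comm]
        linarith [abs_sub_le (G n) (u t) (G (n + 1)), abs_sub_le (u t) (u s) (G (n + 1))]
      have hjump := abs_sub_add_abs_sub_le_of_mem_Icc (p := u s) (q := u t')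
        (hG (n + 1)).1 (hG (n + 1)).2
      have hV := hu.toReal_eVariationOn_Iic_add_le hs.1.le (le_of_lt (lt_trans hs.2 ht'))
      linarith

lemma BoundedVariationOn.sum_edist_le_eVariationOn (hu : BoundedVariationOn u univ)
    (hξ : Monotone ξ) (hG : ∀ i, G i ∈ Icc (u.rightLim (ξ i)) (u.leftLim (ξ i)))
    (hblock : ∀ i, ξ i = ξ (i + 1) → G (i + 1) ≤ G i) (n : ℕ) :
    ∑ i ∈ Finset.range n, edist (G (i + 1)) (G i) ≤ eVariationOn u univ := by
  have hreal : ∑ i ∈ Finset.range n, |G (i + 1) - G i| ≤ (eVariationOn u univ).toReal := by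
    refine le_of_forall_pos_le_add fun ε hε => ?_
    obtain ⟨t, ht⟩ := (hu.eventually_sum_abs_add_abs_le hξ hG hblock n hε).exists
    have hmono : (eVariationOn u (Iic t)).toReal ≤ (eVariationOn u univ).toReal :=
      ENNReal.toReal_mono hu (eVariationOn.mono u (subset_univ _))
    linarith [abs_nonneg (G n - u t)]
  calc ∑ i ∈ Finset.range n, edist (G (i + 1)) (G i)
      = ENNReal.ofReal (∑ i ∈ Finset.range n, |G (i + 1) - G i|) := by
        rw [ENNReal.ofReal_sum_of_nonneg fun i _ => abs_nonneg _]
        simp only [edist_dist, Real.dist_eq]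
    _ ≤ ENNReal.ofReal (eVariationOn u univ).toReal := ENNReal.ofReal_le_ofReal hreal
    _ = eVariationOn u univ := ENNReal.ofReal_toReal hu

lemma BoundedVariationOn.eVariationOn_le_of_mem_Icc {g Ξ : ℝ → ℝ}
    (hu : BoundedVariationOn u univ) (hΞ : Monotone Ξ)
    (hg : ∀ x, g x ∈ Icc (u.rightLim (Ξ x)) (u.leftLim (Ξ x)))
    (hblock : ∀ x y, x ≤ y → Ξ x = Ξ y → g y ≤ g x) :
    eVariationOn g univ ≤ eVariationOn u univ :=
  iSup_le fun ⟨n, c, hc, _⟩ => hu.sum_edist_le_eVariationOn (hΞ.comp hc) (fun i => hg (c i))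
    (fun i => hblock _ _ (hc i.le_succ)) n

end BoundedVariation

section Legendre

variable {f : ℝ → ℝ}

lemma CondF.hasDerivAt (hf : CondF f) (x : ℝ) : HasDerivAt f (deriv f x) x :=
  ((hf.1.differentiable (by norm_num)) x).hasDerivAt

lemma CondF.strictMono_deriv_s19 (hf : CondF f) : StrictMono (deriv f) :=
  strictMono_of_deriv_pos hf.2.1

lemma CondF.surjective_deriv (hf : CondF f) : Function.Surjective (deriv f) :=
  (hf.1.continuous_deriv (by norm_num)).surjective hf.2.2.2 hf.2.2.1

lemma CondF.isGreatest_legendre_s19 (hf : CondF f) (x : ℝ) :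
    IsGreatest (range fun z => deriv f x * z - f z) (deriv f x * x - f x) := by
  refine ⟨⟨x, rfl⟩, forall_mem_range.2 fun z => ?_⟩
  have := mul_sub_le_sub_of_hasDerivAt hf.hasDerivAt hf.strictMono_deriv_s19.monotone x z
  linarith [mul_sub (deriv f x) z x]

lemma CondF.le_legendre (hf : CondF f) (y x : ℝ) : y * x - f x ≤ legendre f y := by
  obtain ⟨z, rfl⟩ := hf.surjective_deriv y
  exact le_csSup (hf.isGreatest_legendre_s19 z).bddAbove ⟨x, rfl⟩

lemma CondF.legendre_deriv_eq (hf : CondF f) (x : ℝ) :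
    legendre f (deriv f x) = deriv f x * x - f x :=
  (hf.isGreatest_legendre_s19 x).csSup_eq

lemma CondF.exists_hasDerivAt_legendre (hf : CondF f) :
    ∃ φ : ℝ → ℝ, Continuous φ ∧ Monotone φ ∧
      ∀ y, HasDerivAt (legendre f) (φ y) y := by
  let e := StrictMono.orderIsoOfSurjective (deriv f) hf.strictMono_deriv_s19 hf.surjective_deriv
  have he : ∀ y, deriv f (e.symm y) = y := e.apply_symm_apply
  refine ⟨e.symm, e.symm.continuous, e.symm.monotone, fun y =>
    hasDerivAt_of_sub_mul_le_sub (m := fun a _ => e.symm a) (fun a b => ?_) tendsto_const_nhds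
      ((e.symm.continuous.tendsto y).mono_left nhdsWithin_le_nhds)⟩
  have hb := hf.le_legendre b (e.symm a)
  have ha := hf.legendre_deriv_eq (e.symm a)
  rw [he] at ha
  rw [sub_mul]
  linarith

end Legendre

lemma tendsto_inf_ae_of_tendsto_nhdsLT {α : Type*} {u : ℝ → α} {l : Filter α} {ξ : ℝ}
    (h : Tendsto u (𝓝[<] ξ) l) : Tendsto u (𝓝[≤] ξ ⊓ ae volume) l := by
  refine h.mono_left ?_
  calc 𝓝[≤] ξ ⊓ ae volume ≤ 𝓝[≤] ξ ⊓ 𝓟 {ξ}ᶜ :=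
        inf_le_inf_left _ (le_principal_iff.2 (compl_mem_ae_iff.2 (measure_singleton ξ)))
    _ = 𝓝[<] ξ := by rw [← nhdsWithin_inter', ← sdiff_eq, Iic_sdiff_right]

section PrimitiveUT

variable {uT : ℝ → ℝ} {C : ℝ}

lemma intervalIntegrable_of_abs_le (huT : Measurable uT) (hC : ∀ x, |uT x| ≤ C) (a b : ℝ) :
    IntervalIntegrable uT volume a b :=
  intervalIntegrable_const.mono_fun' huT.aestronglyMeasurable.restrict
    (ae_of_all _ fun x => by simpa using hC x)

lemma abs_UT_le (hC : ∀ x, |uT x| ≤ C) (xc ξ : ℝ) : |UT uT xc ξ| ≤ C * |ξ - xc| := by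
  simpa [UT] using intervalIntegral.norm_integral_le_of_norm_le_const (f := uT) (C := C)
    (a := xc) (b := ξ) fun x _ => by simpa using hC x

lemma continuous_UT (huT : Measurable uT) (hC : ∀ x, |uT x| ≤ C) (xc : ℝ) :
    Continuous (UT uT xc) :=
  intervalIntegral.continuous_primitive (intervalIntegrable_of_abs_le huT hC) xc

lemma hasDerivWithinAt_UT_Ici (huT : Measurable uT) (hC : ∀ x, |uT x| ≤ C) (xc : ℝ)
    {ξ l : ℝ} (hl : Tendsto uT (𝓝[>] ξ) (𝓝 l)) :
    HasDerivWithinAt (UT uT xc) l (Ici ξ) ξ :=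
  intervalIntegral.integral_hasDerivWithinAt_of_tendsto_ae_right
    (intervalIntegrable_of_abs_le huT hC xc ξ) huT.aestronglyMeasurable.stronglyMeasurableAtFilter
    (hl.mono_left inf_le_left)

lemma hasDerivWithinAt_UT_Iic (huT : Measurable uT) (hC : ∀ x, |uT x| ≤ C) (xc : ℝ)
    {ξ l : ℝ} (hl : Tendsto uT (𝓝[<] ξ) (𝓝 l)) :
    HasDerivWithinAt (UT uT xc) l (Iic ξ) ξ :=
  intervalIntegral.integral_hasDerivWithinAt_of_tendsto_ae_right
    (intervalIntegrable_of_abs_le huT hC xc ξ) huT.aestronglyMeasurable.stronglyMeasurableAtFilter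
    (tendsto_inf_ae_of_tendsto_nhdsLT hl)

end PrimitiveUT

noncomputable def flatObjective (f : ℝ → ℝ) (T : ℝ) (uT : ℝ → ℝ) (xc x ξ : ℝ) : ℝ :=
  UT uT xc ξ - T * legendre f ((ξ - x) / T)

section FlatObjective

variable {f : ℝ → ℝ} {T : ℝ} {uT : ℝ → ℝ} {C xc : ℝ} {φ : ℝ → ℝ}

lemma hasDerivAt_mul_legendre_div (hT : T ≠ 0) (hφ : ∀ y, HasDerivAt (legendre f) (φ y) y)
    (x ξ : ℝ) : HasDerivAt (fun ζ => T * legendre f ((ζ - x) / T)) (φ ((ξ - x) / T)) ξ := by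
  have h := ((hφ ((ξ - x) / T)).comp ξ
    (((hasDerivAt_id' ξ).sub_const x).div_const T)).const_mul T
  rwa [mul_one_div, mul_div_cancel₀ _ hT] at h

lemma CondF.tendsto_flatObjective_cocompact (hf : CondF f) (hT : 0 < T) (hC : ∀ x, |uT x| ≤ C)
    (x : ℝ) : Tendsto (flatObjective f T uT xc x) (cocompact ℝ) atBot := by
  set K := max (f (C + 1)) (f (-(C + 1)))
  have hC₀ : 0 ≤ C := (abs_nonneg _).trans (hC 0)
  -- the superlinear growth of `f*` beats the `C`-Lipschitz growth of `U_T`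
  have hsuper : ∀ y, (C + 1) * |y| - K ≤ legendre f y := by
    intro y
    rcases le_or_gt 0 y with hy | hy
    · rw [abs_of_nonneg hy]
      linarith [hf.le_legendre y (C + 1), le_max_left (f (C + 1)) (f (-(C + 1)))]
    · rw [abs_of_neg hy]
      linarith [hf.le_legendre y (-(C + 1)), le_max_right (f (C + 1)) (f (-(C + 1)))]
  have hbound : ∀ ξ, flatObjective f T uT xc x ξ ≤ C * |x - xc| + T * K + |x| - |ξ| := by
    intro ξ
    have hscale : T * |(ξ - x) / T| = |ξ - x| := by
      rw [abs_div, abs_of_pos hT, mul_div_cancel₀ _ hT.ne']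
    have hL := mul_le_mul_of_nonneg_left (hsuper ((ξ - x) / T)) hT.le
    have hU := (le_abs_self _).trans (abs_UT_le hC xc ξ)
    have htri := mul_le_mul_of_nonneg_left (abs_sub_le ξ x xc) hC₀
    have := abs_sub_abs_le_abs_sub ξ x
    rw [flatObjective]
    nlinarith
  refine tendsto_atBot_mono hbound (tendsto_atBot_add_const_left _ _ ?_)
  exact tendsto_neg_atTop_atBot.comp tendsto_norm_cocompact_atTop

lemma continuous_flatObjective (huT : Measurable uT) (hC : ∀ x, |uT x| ≤ C)
    (hφ : ∀ y, HasDerivAt (legendre f) (φ y) y) (x : ℝ) :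
    Continuous (flatObjective f T uT xc x) :=
  (continuous_UT huT hC xc).sub (continuous_const.mul
    ((continuous_iff_continuousAt.2 fun y => (hφ y).continuousAt).comp
      ((continuous_id.sub continuous_const).div_const T)))

lemma flatObjective_sub_le_sub (hT : 0 < T) (hφ : ∀ y, HasDerivAt (legendre f) (φ y) y)
    (hφm : Monotone φ) {a b ξ η : ℝ} (hab : a ≤ b) (hξη : ξ ≤ η) :
    flatObjective f T uT xc b ξ - flatObjective f T uT xc a ξ ≤
      flatObjective f T uT xc b η - flatObjective f T uT xc a η := by
  have hmono := monotone_add_sub_of_hasDerivAt hφ hφm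
    (div_nonneg (sub_nonneg.2 hab) hT.le)
    (div_le_div_of_nonneg_right (sub_le_sub_right hξη b) hT.le)
  have hshift : ∀ ζ, (ζ - b) / T + (b - a) / T = (ζ - a) / T := fun ζ => by ring
  simp only [hshift] at hmono
  simp only [flatObjective]
  nlinarith

lemma CondF.exists_monotone_isMax_flatObjective (hf : CondF f) (hT : 0 < T)
    (huT : Measurable uT) (hC : ∀ x, |uT x| ≤ C) (xc : ℝ) :
    ∃ Ξ : ℝ → ℝ, Monotone Ξ ∧
      ∀ x ζ, flatObjective f T uT xc x ζ ≤ flatObjective f T uT xc x (Ξ x) := by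
  obtain ⟨φ, -, hφm, hφ⟩ := hf.exists_hasDerivAt_legendre
  have hΞ := fun x => (continuous_flatObjective (T := T) (xc := xc) huT hC hφ x
    ).isGreatest_sSup_argmax (hf.tendsto_flatObjective_cocompact hT hC x)
  exact ⟨_, monotone_of_isGreatest_argmax (fun _ _ _ _ => flatObjective_sub_le_sub hT hφ hφm) hΞ,
    fun x => (hΞ x).1⟩

lemma Uflat_eq_flatObjective {Ξ : ℝ → ℝ}
    (hΞ : ∀ x ζ, flatObjective f T uT xc x ζ ≤ flatObjective f T uT xc x (Ξ x)) (x : ℝ) :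
    Uflat f T uT xc x = flatObjective f T uT xc x (Ξ x) :=
  IsGreatest.csSup_eq ⟨⟨Ξ x, rfl⟩, forall_mem_range.2 (hΞ x)⟩

lemma sub_mul_le_Uflat_sub (hT : 0 < T) (hφ : ∀ y, HasDerivAt (legendre f) (φ y) y)
    (hφm : Monotone φ) {Ξ : ℝ → ℝ}
    (hΞ : ∀ x ζ, flatObjective f T uT xc x ζ ≤ flatObjective f T uT xc x (Ξ x)) (a b : ℝ) :
    (b - a) * φ ((Ξ a - b) / T) ≤ Uflat f T uT xc b - Uflat f T uT xc a := by
  have hb := hΞ b (Ξ a)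
  have htangent := mul_sub_le_sub_of_hasDerivAt hφ hφm ((Ξ a - b) / T) ((Ξ a - a) / T)
  have hscale : T * (φ ((Ξ a - b) / T) * ((Ξ a - a) / T - (Ξ a - b) / T)) =
      (b - a) * φ ((Ξ a - b) / T) := by
    field_simp
    ring
  rw [Uflat_eq_flatObjective hΞ, Uflat_eq_flatObjective hΞ]
  simp only [flatObjective] at hb ⊢
  nlinarith [mul_le_mul_of_nonneg_left htangent hT.le]

lemma hasDerivAt_Uflat (hT : 0 < T) (hφ : ∀ y, HasDerivAt (legendre f) (φ y) y)
    (hφc : Continuous φ) (hφm : Monotone φ) {Ξ : ℝ → ℝ}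
    (hΞ : ∀ x ζ, flatObjective f T uT xc x ζ ≤ flatObjective f T uT xc x (Ξ x)) {x : ℝ}
    (hx : ContinuousAt Ξ x) : HasDerivAt (Uflat f T uT xc) (φ ((Ξ x - x) / T)) x :=
  hasDerivAt_of_sub_mul_le_sub (sub_mul_le_Uflat_sub hT hφ hφm hΞ)
    (((hφc.comp ((continuous_const.sub continuous_id).div_const T)).tendsto x).mono_left
      nhdsWithin_le_nhds)
    ((hφc.continuousAt.comp ((hx.sub continuousAt_const).div_const T)).tendsto.mono_left
      nhdsWithin_le_nhds)

lemma ae_hasDerivAt_Uflat (hT : 0 < T) (hφ : ∀ y, HasDerivAt (legendre f) (φ y) y)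
    (hφc : Continuous φ) (hφm : Monotone φ) {Ξ : ℝ → ℝ} (hΞm : Monotone Ξ)
    (hΞ : ∀ x ζ, flatObjective f T uT xc x ζ ≤ flatObjective f T uT xc x (Ξ x)) :
    ∀ᵐ x, HasDerivAt (Uflat f T uT xc) (φ ((Ξ x - x) / T)) x := by
  rw [ae_iff]
  exact measure_mono_null (fun x hx hcont => hx (hasDerivAt_Uflat hT hφ hφc hφm hΞ hcont))
    (hΞm.countable_not_continuousAt.measure_zero volume)

lemma le_of_tendsto_nhdsGT_of_isMax (hT : 0 < T) (huT : Measurable uT) (hC : ∀ x, |uT x| ≤ C)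
    (hφ : ∀ y, HasDerivAt (legendre f) (φ y) y) {x ξ l : ℝ}
    (hmax : ∀ ζ, flatObjective f T uT xc x ζ ≤ flatObjective f T uT xc x ξ)
    (hl : Tendsto uT (𝓝[>] ξ) (𝓝 l)) : l ≤ φ ((ξ - x) / T) := by
  have := ((hasDerivWithinAt_UT_Ici huT hC xc hl).sub
    (hasDerivAt_mul_legendre_div hT.ne' hφ x ξ).hasDerivWithinAt).nonpos_of_forall_le hmax
  linarith

lemma le_of_tendsto_nhdsLT_of_isMax (hT : 0 < T) (huT : Measurable uT) (hC : ∀ x, |uT x| ≤ C)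
    (hφ : ∀ y, HasDerivAt (legendre f) (φ y) y) {x ξ l : ℝ}
    (hmax : ∀ ζ, flatObjective f T uT xc x ζ ≤ flatObjective f T uT xc x ξ)
    (hl : Tendsto uT (𝓝[<] ξ) (𝓝 l)) : φ ((ξ - x) / T) ≤ l := by
  have := ((hasDerivWithinAt_UT_Iic huT hC xc hl).sub
    (hasDerivAt_mul_legendre_div hT.ne' hφ x ξ).hasDerivWithinAt).nonneg_of_forall_le hmax
  linarith

end FlatObjective

theorem stmt_19 (f : ℝ → ℝ) (hf : CondF f) (T : ℝ) (hT : 0 < T)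
    (uT : ℝ → ℝ) (huT : Measurable uT) (C : ℝ) (hC : ∀ x, |uT x| ≤ C) (xc : ℝ) :
    ∃ g : ℝ → ℝ, (∀ᵐ x ∂volume, HasDerivAt (Uflat f T uT xc) (g x) x) ∧
      eVariationOn g Set.univ ≤ eVariationOn uT Set.univ := by
  obtain ⟨φ, hφc, hφm, hφ⟩ := hf.exists_hasDerivAt_legendre
  obtain ⟨Ξ, hΞm, hΞ⟩ := hf.exists_monotone_isMax_flatObjective hT huT hC xc
  refine ⟨fun x => φ ((Ξ x - x) / T), ae_hasDerivAt_Uflat hT hφ hφc hφm hΞm hΞ, ?_⟩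
  by_cases hu : BoundedVariationOn uT univ
  · refine hu.eVariationOn_le_of_mem_Icc hΞm (fun x => ⟨?_, ?_⟩) fun x y hxy hΞxy => hφm ?_
    · exact le_of_tendsto_nhdsGT_of_isMax hT huT hC hφ (hΞ x) (hu.tendsto_rightLim _)
    · exact le_of_tendsto_nhdsLT_of_isMax hT huT hC hφ (hΞ x) (hu.tendsto_leftLim _)
    · rw [hΞxy]
      gcongr
  · rw [BoundedVariationOn, not_not] at hu
    simp [hu]
end
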